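/- For R₁ ≥ R₂ > 0 define Ψ_{R₁,R₂}(x) := |B_{R₁}(0) ∩ B_{R₂}(x)| (the Lebesgue measure of the intersection of the two balls), a radial function of x which is absolutely continuous in r = |x| with −(d/dr)Ψ_{R₁,R₂}(r) = |∂B_{R₁}(0) ∩ B_{R₂}(r)| (the (d−1)-dimensional surface measure) for r ∈ (R₁−R₂, R₁+R₂). Then for every ε₀ ∈ (0, 1), there is a constant c(d, ε₀) > 0 such that −(d/dr)Ψ_{R₁,R₂}(r) ≥ c(d, ε₀) R₂^{d−1} whenever |r − R₁| ≤ (1−ε₀) R₂. -/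

import Mathlib

/-!
Write `A = B_{R₁}(0)`, `C_t = B_{R₂}(t e)` and `A' = A - h e`. Translating by `h e` turns
`A ∩ C_{r+h}` into `A' ∩ C_r`, and `A' ∩ C_r ⊆ A`: a point `x` of it lies on the segment from
`x + h e ∈ A` to `x - r e ∈ B_{R₂}(0) ⊆ A` (here `r ≥ 0`).
Hence `Ψ(r) - Ψ(r + h) = |(A \ A') ∩ C_r|`.
The shell `A \ A'` has thickness `h` in the direction `e`: by translation invariance, its part in
the half-cylinder `K = {⟪x, e⟫ > 0, transverse coordinates in (-β, β)}`, `β = ε₀ R₂ / (4d)`, has at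
least the measure `h (2β)^{d-1}` of the slab `K ∩ {⟪x, e⟫ ≤ h}`. When `|r - R₁| ≤ (1 - ε₀) R₂`,
this part of the shell is close enough to `R₁ e` to lie in `C_r`. Dividing by `h` and letting
`h → 0⁺` gives `-Ψ'(r) ≥ (ε₀ R₂ / (2d))^{d-1}`.
-/

open MeasureTheory Metric Set Filter ENNReal
noncomputable section

abbrev Euc (d : ℕ) := EuclideanSpace ℝ (Fin d)

/-- `Ψ_{R₁,R₂}`, as a radial function of the center of the second ball:
the Lebesgue measure of `B_{R₁}(0) ∩ B_{R₂}(x)` with `x = t • e`. -/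
def Psi (d : ℕ) (R₁ R₂ : ℝ) (e : Euc d) (t : ℝ) : ℝ :=
  ((volume : Measure (Euc d)) (ball (0 : Euc d) R₁ ∩ ball (t • e) R₂)).toReal

open scoped RealInnerProductSpace

theorem measure_inter_sdiff_preimage_sub_le {G : Type*} [AddGroup G] [MeasurableSpace G]
    [MeasurableAdd G] {μ : Measure G} [μ.IsAddRightInvariant] {A K : Set G} {v : G}
    (hA : MeasurableSet A) (hK : MeasurableSet K) (hAK : μ (A ∩ K) ≠ ∞)
    (hKv : ∀ x ∈ K, x + v ∈ K) :
    μ (A ∩ (K \ (· - v) ⁻¹' K)) ≤ μ ((A \ (· + v) ⁻¹' A) ∩ K) := by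
  set K' := (· - v) ⁻¹' K
  have hK'K : K' ⊆ K := fun x hx => by simpa using hKv _ hx
  have hK' : MeasurableSet K' := by
    simpa [K', sub_eq_add_neg] using measurable_add_const (-v) hK
  have hshift : μ (K ∩ (· + v) ⁻¹' A) = μ (A ∩ K') := by
    rw [← measure_preimage_add_right μ v (A ∩ K')]
    congr 1
    ext x
    simp [K', and_comm]
  have hsplit : μ (A ∩ K') + μ (A ∩ (K \ K')) = μ (A ∩ K) := by
    rw [← measure_union' _ (hA.inter hK'), ← inter_union_distrib_left, union_sdiff_cancel hK'K]
    exact disjoint_left.2 fun x hx hx' => hx'.2.2 hx.2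
  have hcut : μ (A ∩ K) ≤ μ (A ∩ K') + μ ((A \ (· + v) ⁻¹' A) ∩ K) := by
    rw [← measure_inter_add_sdiff (A ∩ K) (measurable_add_const v hA), ← hshift]
    exact add_le_add (measure_mono fun x hx => ⟨hx.1.2, hx.2⟩)
      (measure_mono fun x hx => ⟨⟨hx.1.1, hx.2⟩, hx.1.2⟩)
  have hfin : μ (A ∩ K') ≠ ∞ := ne_top_of_le_ne_top hAK (by gcongr)
  rw [← hsplit] at hcut
  exact (ENNReal.add_le_add_iff_left hfin).1 hcut

theorem Convex.mem_of_add_smul_mem_of_sub_smul_mem {E : Type*} [AddCommGroup E] [Module ℝ E]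
    {s : Set E} (hs : Convex ℝ s) {x w : E} {a b : ℝ} (ha : 0 < a) (hb : 0 ≤ b)
    (h₁ : x + a • w ∈ s) (h₂ : x - b • w ∈ s) : x ∈ s := by
  have hab : 0 < a + b := by linarith
  convert hs h₁ h₂ (div_nonneg hb hab.le) (div_nonneg ha.le hab.le) (by field_simp; ring)
    using 1
  match_scalars <;> field_simp <;> ring

theorem preimage_add_smul_ball_inter_ball_subset {E : Type*} [SeminormedAddCommGroup E]
    [NormedSpace ℝ E] (w : E) {h r R₁ R₂ : ℝ} (hh : 0 < h) (hr : 0 ≤ r) (hR : R₂ ≤ R₁) :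
    (· + h • w) ⁻¹' ball 0 R₁ ∩ ball (r • w) R₂ ⊆ ball 0 R₁ := by
  rintro x ⟨hx₁, hx₂⟩
  refine (convex_ball 0 R₁).mem_of_add_smul_mem_of_sub_smul_mem hh hr hx₁ ?_
  rw [mem_ball_zero_iff, ← mem_ball_iff_norm]
  exact ball_subset_ball hR hx₂

theorem norm_sub_smul_lt_of_le_norm_add_smul {E : Type*} [NormedAddCommGroup E]
    [InnerProductSpace ℝ E] {e x : E} (he : ‖e‖ = 1) {ε R₁ R₂ r h : ℝ} (hε : ε ∈ Ioo 0 1)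
    (hR₂ : 0 < R₂) (hR : R₂ ≤ R₁) (hr : |r - R₁| ≤ (1 - ε) * R₂) (hh : h ∈ Ioc 0 (ε * R₂ / 4))
    (hx : ‖x‖ < R₁) (hxh : R₁ ≤ ‖x + h • e‖)
    (hρ : ‖x‖ ^ 2 ≤ ⟪x, e⟫ ^ 2 + (ε * R₂ / 4) ^ 2) : ‖x - r • e‖ < R₂ := by
  obtain ⟨hε₀, hε₁⟩ := hε
  obtain ⟨hh₀, hhδ⟩ := hh
  obtain ⟨hr₁, hr₂⟩ := abs_le.1 hr
  set t := ⟪x, e⟫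
  set δ := ε * R₂ / 4 with hδ
  have hadd : ‖x + h • e‖ ^ 2 = ‖x‖ ^ 2 + 2 * h * t + h ^ 2 := by
    rw [norm_add_sq_real, inner_smul_right, norm_smul, he, Real.norm_eq_abs, abs_of_pos hh₀]
    ring
  have hsub : ‖x - r • e‖ ^ 2 = ‖x‖ ^ 2 - 2 * r * t + r ^ 2 := by
    rw [norm_sub_sq_real, inner_smul_right, norm_smul, he, Real.norm_eq_abs, mul_one, sq_abs]
    ring
  have hR₁sq : R₁ ^ 2 ≤ ‖x‖ ^ 2 + 2 * h * t + h ^ 2 :=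
    hadd ▸ pow_le_pow_left₀ (hR₂.le.trans hR) hxh 2
  have ht : t < R₁ := (real_inner_le_norm x e).trans_lt (by rwa [he, mul_one])
  -- `x + h • e` leaves the ball only if `t > -h / 2`, so `R₁ + t + h ≥ R₂`
  have hgap : R₂ * (R₁ - (t + h)) ≤ δ ^ 2 := by
    have hpos : 0 < 2 * h * t + h ^ 2 := by nlinarith [norm_nonneg x]
    have hth : 0 < t + h := by nlinarith
    rcases le_or_gt (R₁ - (t + h)) 0 with hle | hlt <;> nlinarith
  have hδR : δ ^ 2 ≤ ε / 16 * R₂ * R₂ := by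
    have : δ ^ 2 = ε ^ 2 / 16 * R₂ * R₂ := by ring
    rw [this]; gcongr; nlinarith
  -- `t ≥ R₁ - h - δ ^ 2 / R₂ ≥ R₁ - 5 ε R₂ / 16`, whence the factor `1 - 11 ε / 16`
  have hlow : -((1 - 11 * ε / 16) * R₂) ≤ t - r := by
    have : R₁ - (t + h) ≤ ε / 16 * R₂ := by nlinarith
    linarith [hδ]
  have hup : t - r ≤ (1 - 11 * ε / 16) * R₂ := by nlinarith
  have hq : (1 - 11 * ε / 16) ^ 2 + (ε / 4) ^ 2 < 1 := by nlinarith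
  have hsq : (t - r) ^ 2 ≤ ((1 - 11 * ε / 16) * R₂) ^ 2 := sq_le_sq' hlow hup
  refine lt_of_pow_lt_pow_left₀ 2 hR₂.le ?_
  rw [hsub]
  nlinarith

section
variable {ι : Type*} [DecidableEq ι]

def coordBox (i : ι) (s : Set ℝ) (β : ℝ) : Set (EuclideanSpace ℝ ι) :=
  WithLp.ofLp ⁻¹' univ.pi (Function.update (fun _ => Ioo (-β) β) i s)

theorem mem_coordBox {i : ι} {s : Set ℝ} {β : ℝ} {x : EuclideanSpace ℝ ι} :
    x ∈ coordBox i s β ↔ x i ∈ s ∧ ∀ j ≠ i, x j ∈ Ioo (-β) β := by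
  simp only [coordBox, mem_preimage, mem_univ_pi]
  constructor
  · intro hx
    exact ⟨by simpa using hx i, fun j hj => by simpa [hj] using hx j⟩
  · rintro ⟨hi, hj⟩ j
    by_cases hji : j = i
    · subst hji; simpa using hi
    · simpa [hji] using hj j hji

theorem add_smul_single_mem_coordBox {i : ι} {s : Set ℝ} {β a : ℝ} {x : EuclideanSpace ℝ ι} :
    x + a • EuclideanSpace.single i 1 ∈ coordBox i s β ↔ x ∈ coordBox i ((· + a) ⁻¹' s) β := by
  simp +contextual [mem_coordBox]

theorem measurableSet_coordBox [Fintype ι] (i : ι) {s : Set ℝ} (hs : MeasurableSet s) (β : ℝ) :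
    MeasurableSet (coordBox i s β) := by
  refine (PiLp.volume_preserving_ofLp ι).measurable (MeasurableSet.univ_pi fun j => ?_)
  rcases eq_or_ne j i with rfl | hj
  · simpa using hs
  · simp [hj]

theorem volume_coordBox [Fintype ι] (i : ι) {s : Set ℝ} (hs : MeasurableSet s) (β : ℝ) :
    volume (coordBox i s β) = volume s * ENNReal.ofReal (2 * β) ^ (Fintype.card ι - 1) := by
  rw [coordBox, (PiLp.volume_preserving_ofLp ι).measure_preimage
    (MeasurableSet.univ_pi fun j => ?_).nullMeasurableSet, volume_pi_pi]
  · rw [Fintype.prod_eq_mul_prod_compl i, Function.update_self,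
      Finset.prod_congr rfl fun j hj => by rw [Function.update_of_ne (by simpa using hj)],
      Finset.prod_const, Finset.card_compl, Finset.card_singleton, Real.volume_Ioo]
    ring_nf
  · rcases eq_or_ne j i with rfl | hj
    · simpa using hs
    · simp [hj]

theorem norm_sq_le_of_mem_coordBox [Fintype ι] {i : ι} {s : Set ℝ} {δ : ℝ}
    {x : EuclideanSpace ℝ ι} (hx : x ∈ coordBox i s (δ / Fintype.card ι)) :
    ‖x‖ ^ 2 ≤ x i ^ 2 + δ ^ 2 := by
  set n : ℝ := (Fintype.card ι : ℝ)
  have hn : 1 ≤ n := Nat.one_le_cast.2 (Fintype.card_pos_iff.2 ⟨i⟩)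
  have hcard : ((({i}ᶜ : Finset ι)).card : ℝ) ≤ n := Nat.cast_le.2 (Finset.card_le_univ _)
  have hsum : ∑ j ∈ {i}ᶜ, x j ^ 2 ≤ δ ^ 2 :=
    calc ∑ j ∈ {i}ᶜ, x j ^ 2 ≤ ∑ _j ∈ ({i}ᶜ : Finset ι), (δ / n) ^ 2 :=
          Finset.sum_le_sum fun j hj => by
            have hxj := (mem_coordBox.1 hx).2 j (by simpa using hj)
            exact sq_le_sq' hxj.1.le hxj.2.le
      _ ≤ n * (δ / n) ^ 2 := by
          rw [Finset.sum_const, nsmul_eq_mul]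
          exact mul_le_mul_of_nonneg_right hcard (sq_nonneg _)
      _ = δ ^ 2 / n := by field_simp
      _ ≤ δ ^ 2 := div_le_self (sq_nonneg _) hn
  rw [EuclideanSpace.real_norm_sq_eq, Fintype.sum_eq_add_sum_compl i]
  linarith

theorem coordBox_Ioc_subset_ball [Fintype ι] (i : ι) {h δ R : ℝ} (hh : h ≤ δ) (hR : 0 ≤ R)
    (hδR : 2 * δ ^ 2 < R ^ 2) :
    coordBox i (Ioc 0 h) (δ / Fintype.card ι) ⊆ ball 0 R := fun x hx => by
  obtain ⟨⟨hxi₀, hxih⟩, -⟩ := mem_coordBox.1 hx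
  have hxi : x i ^ 2 ≤ δ ^ 2 := pow_le_pow_left₀ hxi₀.le (hxih.trans hh) 2
  have hxR : ‖x‖ ^ 2 < R ^ 2 := by linarith [norm_sq_le_of_mem_coordBox hx]
  exact mem_ball_zero_iff.2 (lt_of_pow_lt_pow_left₀ 2 hR hxR)

theorem volume_coordBox_Ioc_le [Fintype ι] (i : ι) {A : Set (EuclideanSpace ℝ ι)}
    (hA : MeasurableSet A) (hA' : volume A ≠ ∞) {h β : ℝ} (hh : 0 ≤ h)
    (hsub : coordBox i (Ioc 0 h) β ⊆ A) :
    volume (coordBox i (Ioc 0 h) β) ≤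
      volume ((A \ (· + h • EuclideanSpace.single i 1) ⁻¹' A) ∩ coordBox i (Ioi 0) β) := by
  calc volume (coordBox i (Ioc 0 h) β) = volume (A ∩ coordBox i (Ioc 0 h) β) := by
        rw [inter_eq_right.2 hsub]
    _ ≤ volume (A ∩ (coordBox i (Ioi 0) β \
          (· - h • EuclideanSpace.single i 1) ⁻¹' coordBox i (Ioi 0) β)) := by
        refine measure_mono (inter_subset_inter_right _ fun x hx => ?_)
        simp_rw [Set.mem_sdiff, mem_preimage, sub_eq_add_neg, ← neg_smul,
          add_smul_single_mem_coordBox]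
        simp_all [mem_coordBox]
    _ ≤ _ := measure_inter_sdiff_preimage_sub_le hA (measurableSet_coordBox i measurableSet_Ioi β)
        (ne_top_of_le_ne_top hA' (measure_mono inter_subset_left)) fun x hx => by
          obtain ⟨hxi, hxj⟩ := mem_coordBox.1 hx
          exact add_smul_single_mem_coordBox.2
            (mem_coordBox.2 ⟨add_pos_of_pos_of_nonneg hxi hh, hxj⟩)

end

theorem volume_ball_inter_ball_add_le {ι : Type*} [Fintype ι] [DecidableEq ι]
    (i : ι) {ε R₁ R₂ r h : ℝ} (hε : ε ∈ Ioo 0 1) (hR₂ : 0 < R₂) (hR : R₂ ≤ R₁)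
    (hr : |r - R₁| ≤ (1 - ε) * R₂) (hh : h ∈ Ioc 0 (ε * R₂ / 4)) :
    volume (ball (0 : EuclideanSpace ℝ ι) R₁ ∩ ball ((r + h) • EuclideanSpace.single i 1) R₂)
        + ENNReal.ofReal ((ε * R₂ / (2 * Fintype.card ι)) ^ (Fintype.card ι - 1) * h)
      ≤ volume (ball (0 : EuclideanSpace ℝ ι) R₁ ∩ ball (r • EuclideanSpace.single i 1) R₂) := by
  set e : EuclideanSpace ℝ ι := EuclideanSpace.single i 1
  set A := ball (0 : EuclideanSpace ℝ ι) R₁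
  set A' := (· + h • e) ⁻¹' A
  set C := ball (r • e) R₂
  set δ := ε * R₂ / 4 with hδ
  set β := δ / Fintype.card ι with hβ
  have hδ₀ : 0 < δ := by have := hε.1; positivity
  have hδR : 2 * δ ^ 2 < R₂ ^ 2 := by
    have : δ < R₂ / 2 := by rw [hδ]; nlinarith [hε.2]
    nlinarith
  have htrans : volume (A ∩ ball ((r + h) • e) R₂) = volume (A' ∩ C) := by
    rw [← measure_preimage_add_right volume (h • e)]
    congr 1
    ext x
    simp [A', A, C, add_smul]
  have hr₀ : 0 ≤ r := by linarith [(abs_le.1 hr).1, mul_pos hε.1 hR₂]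
  have hin : A' ∩ C ⊆ (A ∩ C) ∩ A' := fun x hx =>
    ⟨⟨preimage_add_smul_ball_inter_ball_subset e hh.1 hr₀ hR hx, hx.2⟩, hx.1⟩
  have hout : (A \ A') ∩ coordBox i (Ioi 0) β ⊆ (A ∩ C) \ A' := by
    rintro x ⟨⟨hxA, hxA'⟩, hxK⟩
    have hxh : R₁ ≤ ‖x + h • e‖ :=
      not_lt.1 (by simpa only [A', A, mem_preimage, mem_ball_zero_iff] using hxA')
    refine ⟨⟨hxA, mem_ball_iff_norm.2 ?_⟩, hxA'⟩
    refine norm_sub_smul_lt_of_le_norm_add_smul (by simp [e]) hε hR₂ hR hr hh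
      (mem_ball_zero_iff.1 hxA) hxh ?_
    simpa [e, EuclideanSpace.inner_single_right] using norm_sq_le_of_mem_coordBox hxK
  have hslab : coordBox i (Ioc 0 h) β ⊆ A :=
    (coordBox_Ioc_subset_ball i hh.2 hR₂.le hδR).trans (ball_subset_ball hR)
  calc volume (A ∩ ball ((r + h) • e) R₂)
        + ENNReal.ofReal ((ε * R₂ / (2 * Fintype.card ι)) ^ (Fintype.card ι - 1) * h)
      = volume (A' ∩ C) + volume (coordBox i (Ioc 0 h) β) := by
        rw [htrans, volume_coordBox i measurableSet_Ioc, Real.volume_Ioc, sub_zero,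
          ← ENNReal.ofReal_pow (by positivity), ← ENNReal.ofReal_mul hh.1.le, mul_comm h, hβ, hδ]
        ring_nf
    _ ≤ volume ((A ∩ C) ∩ A') + volume ((A ∩ C) \ A') :=
        add_le_add (measure_mono hin) ((volume_coordBox_Ioc_le i measurableSet_ball
          measure_ball_lt_top.ne hh.1.le hslab).trans (measure_mono hout))
    _ = volume (A ∩ C) := measure_inter_add_sdiff _ (measurable_add_const _ measurableSet_ball)

theorem Psi_eq_of_norm_eq {d : ℕ} (R₁ R₂ : ℝ) {e e' : Euc d} (h : ‖e‖ = ‖e'‖) :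
    Psi d R₁ R₂ e = Psi d R₁ R₂ e' := by
  set L := (ℝ ∙ (e' - e))ᗮ.reflection
  have hL : L.symm e = e' := L.symm_apply_eq.2 (Submodule.reflection_sub h.symm).symm
  funext t
  rw [Psi, Psi, ← L.measurePreserving.measure_preimage
    (measurableSet_ball.inter measurableSet_ball).nullMeasurableSet, preimage_inter,
    L.preimage_ball, L.preimage_ball, map_zero, map_smul, hL]

theorem Psi_single_add_add_mul_le {d : ℕ} (i : Fin d) {ε R₁ R₂ r h : ℝ} (hε : ε ∈ Ioo 0 1)
    (hR₂ : 0 < R₂) (hR : R₂ ≤ R₁) (hr : |r - R₁| ≤ (1 - ε) * R₂)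
    (hh : h ∈ Ioc 0 (ε * R₂ / 4)) :
    Psi d R₁ R₂ (EuclideanSpace.single i 1) (r + h) + (ε * R₂ / (2 * d)) ^ (d - 1) * h
      ≤ Psi d R₁ R₂ (EuclideanSpace.single i 1) r := by
  have key := volume_ball_inter_ball_add_le i hε hR₂ hR hr hh
  rw [Fintype.card_fin] at key
  have hfin : ∀ s, volume (ball (0 : Euc d) R₁ ∩ ball s R₂) ≠ ∞ := fun s =>
    ne_top_of_le_ne_top measure_ball_lt_top.ne (measure_mono inter_subset_left)
  have hpos : 0 ≤ (ε * R₂ / (2 * d)) ^ (d - 1) * h := by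
    have := hε.1; have := hh.1; positivity
  simpa [Psi, ENNReal.toReal_add (hfin _) ENNReal.ofReal_ne_top, ENNReal.toReal_ofReal hpos]
    using ENNReal.toReal_mono (hfin _) key

theorem HasDerivAt.le_neg_of_add_mul_le {f : ℝ → ℝ} {D r c η : ℝ} (hf : HasDerivAt f D r)
    (hη : 0 < η) (hle : ∀ x ∈ Ioo r (r + η), f x + c * (x - r) ≤ f r) : D ≤ -c := by
  refine le_of_tendsto (hasDerivAt_iff_tendsto_slope_left_right.1 hf).2 ?_
  filter_upwards [Ioo_mem_nhdsGT (by linarith : r < r + η)] with x hx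
  rw [slope_def_field, div_le_iff₀ (sub_pos.2 hx.1)]
  linarith [hle x hx]

theorem stmt7 (d : ℕ) (hd : 1 ≤ d) (ε₀ : ℝ) (hε : ε₀ ∈ Ioo (0 : ℝ) 1) :
    ∃ c : ℝ, 0 < c ∧
      ∀ R₁ R₂ : ℝ, 0 < R₂ → R₂ ≤ R₁ →
        ∀ e : Euc d, ‖e‖ = 1 →
          ∀ r : ℝ, |r - R₁| ≤ (1 - ε₀) * R₂ →
            ∀ D : ℝ, HasDerivAt (Psi d R₁ R₂ e) D r →
              c * R₂ ^ ((d : ℝ) - 1) ≤ -D := by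
  have hε₀ := hε.1
  refine ⟨(ε₀ / (2 * d)) ^ (d - 1), by positivity, ?_⟩
  intro R₁ R₂ hR₂ hR e he r hr D hD
  let i : Fin d := ⟨0, hd⟩
  rw [Psi_eq_of_norm_eq R₁ R₂ (e' := EuclideanSpace.single i 1) (by simpa using he)] at hD
  have hD' := hD.le_neg_of_add_mul_le (by positivity : 0 < ε₀ * R₂ / 4) fun x hx => by
    simpa using Psi_single_add_add_mul_le i hε hR₂ hR hr (h := x - r)
      ⟨sub_pos.2 hx.1, by linarith [hx.2]⟩
  calc (ε₀ / (2 * d)) ^ (d - 1) * R₂ ^ ((d : ℝ) - 1) = (ε₀ * R₂ / (2 * d)) ^ (d - 1) := by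
        rw [show (d : ℝ) - 1 = (d - 1 : ℕ) by push_cast [hd]; rfl, Real.rpow_natCast, ← mul_pow]
        ring
    _ ≤ -D := le_neg_of_le_neg hD'
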